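/- Let d ≥ 3 and 1 ≤ r ≤ d−2, and let ρ_r = (1/r) Σ_{l=1}^r E_{ll}. Then for any k ∈ {1,…,d} and any two distinct indices i, j with r < i, j ≤ d, the single-sample second moment of an off-diagonal entry of the C block of the covariant-measurement least squares estimator equals d(d+1)² · ∫_{U(d)} ⟨e_k, U*ρ_r U e_k⟩ · |U_{ik}|² |U_{jk}|² dU = (d+1)/(d+2). -/

import Mathlib

open MeasureTheory ProbabilityTheory Matrix
open scoped ComplexOrder

/-- The Borel (= product) σ-algebra on `d × d` complex matrices. -/
noncomputable instance matrixMeasurableSpace (d : ℕ) : MeasurableSpace (Matrix (Fin d) (Fin d) ℂ) :=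
  MeasurableSpace.pi

/-- A density matrix: positive semidefinite with trace one. -/
def IsDensityMatrix {d : ℕ} (ρ : Matrix (Fin d) (Fin d) ℂ) : Prop :=
  ρ.PosSemidef ∧ ρ.trace = 1

/-- The rank-one projection `U E_{jj} U*`. -/
noncomputable def covProj (d : ℕ) (j : Fin d) (U : Matrix.unitaryGroup (Fin d) ℂ) :
    Matrix (Fin d) (Fin d) ℂ :=
  (U : Matrix (Fin d) (Fin d) ℂ) * Matrix.single j j 1 *
    star (U : Matrix (Fin d) (Fin d) ℂ)

/-- The outcome law `μ_ρ` of the covariant measurement on the state `ρ`, built from the Haar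
probability measure `μ` on the unitary group: the distribution of `U E_{JJ} U*` where `U ~ μ`
and, conditionally on `U`, `J = j` has probability `⟨e_j, U* ρ U e_j⟩`. -/
noncomputable def covariantLaw (d : ℕ) (μ : Measure (Matrix.unitaryGroup (Fin d) ℂ))
    (ρ : Matrix (Fin d) (Fin d) ℂ) : Measure (Matrix (Fin d) (Fin d) ℂ) :=
  Measure.sum fun j : Fin d =>
    Measure.map (covProj d j)
      (μ.withDensity fun U =>
        ENNReal.ofReal
          ((star (U : Matrix (Fin d) (Fin d) ℂ) * ρ * (U : Matrix (Fin d) (Fin d) ℂ)) j j).re)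

/-- The least squares estimator `ρ̂_LS = (1/N) Σ_i ((d+1) P_i - I)`. -/
noncomputable def lsEst {Ω : Type*} (d N : ℕ) (P : Fin N → Ω → Matrix (Fin d) (Fin d) ℂ)
    (ω : Ω) : Matrix (Fin d) (Fin d) ℂ :=
  (N : ℂ)⁻¹ • ∑ i, ((d + 1 : ℂ) • P i ω - 1)

/-- Squared Frobenius norm `‖A‖₂² = Tr(A* A)`. -/
noncomputable def frobSq {d : ℕ} (A : Matrix (Fin d) (Fin d) ℂ) : ℝ :=
  (Matrix.trace (Aᴴ * A)).re

/-- Frobenius norm `‖A‖₂ = (Tr(A* A))^{1/2}`. -/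
noncomputable def frobNorm {d : ℕ} (A : Matrix (Fin d) (Fin d) ℂ) : ℝ :=
  Real.sqrt (Matrix.trace (Aᴴ * A)).re

/-- Operator norm (largest singular value) of a matrix, as the `ℓ² → ℓ²` operator norm. -/
noncomputable def opNorm {d : ℕ} (A : Matrix (Fin d) (Fin d) ℂ) : ℝ :=
  ‖LinearMap.toContinuousLinearMap (Matrix.toEuclideanLin A)‖

/-- Trace norm `‖A‖₁ = Tr|A|`: the sum of the singular values of `A`. -/
noncomputable def traceNorm {d : ℕ} (A : Matrix (Fin d) (Fin d) ℂ) : ℝ :=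
  ∑ i, Real.sqrt ((Matrix.posSemidef_conjTranspose_mul_self A).1.eigenvalues i)

/-- The rank-`r` density matrix `ρ_r = (1/r) Σ_{i=1}^r E_{ii}`. -/
noncomputable def rhoR (d r : ℕ) : Matrix (Fin d) (Fin d) ℂ :=
  (r : ℂ)⁻¹ • ∑ i : Fin d, if (i : ℕ) < r then Matrix.single i i 1 else 0

/-!
Write `x_a(U) = |U_{ak}|²`. The `k`-th column of a unitary is a unit vector, so `∑ₐ x_a = 1`,
whence `∑_p E[x_p ∏_{a ∈ s} x_a] = E[∏_{a ∈ s} x_a]`. Left invariance of `μ` under permutation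
matrices makes these moments depend only on the multiplicity pattern of `s`. Invariance under the
Hadamard rotation of rows `a ≠ b` gives `E[x_a x_b P] = (E[x_a² P] + E[x_b² P]) / 4` for a monomial
`P` in the other rows: the rotation produces a cross term `Re(U_{ak}² conj(U_{bk})²)` whose mean
vanishes, because multiplying row `a` by `i` negates it. Solving the resulting linear equations
gives `E[x_a] = 1/d`, `E[x_a x_b] = 1/(d(d+1))` and `E[x_a x_b x_c] = 1/(d(d+1)(d+2))` for
distinct indices. Finally `⟨e_k, U* ρ_r U e_k⟩ = (1/r) ∑_{q<r} x_q`, and every `q < r` differs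
from `i` and `j`.
-/

open Equiv

section SpecialUnitaries

variable {d : ℕ}

def permUnitary (σ : Perm (Fin d)) : unitaryGroup (Fin d) ℂ :=
  ⟨σ.permMatrix ℂ, by
    rw [mem_unitaryGroup_iff', star_eq_conjTranspose, conjTranspose_permMatrix, ← permMatrix_mul,
      mul_inv_cancel, permMatrix_one]⟩

lemma permUnitary_mul_apply (σ : Perm (Fin d)) (U : unitaryGroup (Fin d) ℂ) (p q : Fin d) :
    (permUnitary σ * U).1 p q = U.1 (σ p) q := by
  simp [permUnitary, PEquiv.toMatrix_toPEquiv_mul]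

def phaseUnitary (a : Fin d) : unitaryGroup (Fin d) ℂ :=
  ⟨diagonal (Function.update (1 : Fin d → ℂ) a Complex.I), by
    rw [mem_unitaryGroup_iff', star_eq_conjTranspose, diagonal_conjTranspose,
      diagonal_mul_diagonal, ← diagonal_one]
    congr 1
    ext p
    rcases eq_or_ne p a with rfl | hp <;> simp [*]⟩

lemma phaseUnitary_mul_apply (a : Fin d) (U : unitaryGroup (Fin d) ℂ) (p q : Fin d) :
    (phaseUnitary a * U).1 p q = Function.update (1 : Fin d → ℂ) a Complex.I p * U.1 p q :=
  diagonal_mul _ _ _ _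

noncomputable def hadamardMatrix (a b : Fin d) : Matrix (Fin d) (Fin d) ℂ :=
  of fun p q =>
    if p = a then (√2 : ℂ)⁻¹ * ((1 : Matrix _ _ ℂ) a q + (1 : Matrix _ _ ℂ) b q)
    else if p = b then (√2 : ℂ)⁻¹ * ((1 : Matrix _ _ ℂ) a q - (1 : Matrix _ _ ℂ) b q)
    else (1 : Matrix _ _ ℂ) p q

lemma hadamardMatrix_mul_apply (a b : Fin d) (M : Matrix (Fin d) (Fin d) ℂ) (p q : Fin d) :
    (hadamardMatrix a b * M) p q =
      if p = a then (√2 : ℂ)⁻¹ * (M a q + M b q)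
      else if p = b then (√2 : ℂ)⁻¹ * (M a q - M b q) else M p q := by
  simp only [hadamardMatrix, mul_apply, of_apply]
  split_ifs <;>
    simp [one_apply, add_mul, sub_mul, mul_assoc, Finset.sum_add_distrib, ← Finset.mul_sum]

lemma inv_sqrt_two_mul_self : (√2 : ℂ)⁻¹ * (√2 : ℂ)⁻¹ = 1 / 2 := by
  rw [← mul_inv, ← Complex.ofReal_mul, Real.mul_self_sqrt zero_le_two]
  norm_num

lemma norm_inv_sqrt_two_sq : ‖(√2 : ℂ)⁻¹‖ ^ 2 = 1 / 2 := by
  rw [norm_inv, Complex.norm_real, Real.norm_of_nonneg (Real.sqrt_nonneg 2), inv_pow,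
    Real.sq_sqrt zero_le_two, one_div]

lemma hadamardMatrix_mem_unitaryGroup {a b : Fin d} (hab : a ≠ b) :
    hadamardMatrix a b ∈ unitaryGroup (Fin d) ℂ := by
  have trichotomy : ∀ p : Fin d, p = a ∨ p = b ∨ (p ≠ a ∧ p ≠ b ∧ a ≠ p ∧ b ≠ p) := by
    grind
  have hself : star (hadamardMatrix a b) = hadamardMatrix a b := by
    ext p q
    rw [star_apply]
    obtain rfl | rfl | hp := trichotomy p <;> obtain rfl | rfl | hq := trichotomy q <;>
      simp [hadamardMatrix, one_apply, Complex.conj_ofReal, hab.symm, *]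
    grind
  rw [mem_unitaryGroup_iff', hself]
  ext p q
  rw [hadamardMatrix_mul_apply]
  obtain rfl | rfl | hp := trichotomy p <;> obtain rfl | rfl | hq := trichotomy q <;>
    simp [hadamardMatrix, one_apply, hab.symm, *] <;>
    linear_combination 2 * inv_sqrt_two_mul_self

noncomputable def hadamardUnitary {a b : Fin d} (hab : a ≠ b) : unitaryGroup (Fin d) ℂ :=
  ⟨hadamardMatrix a b, hadamardMatrix_mem_unitaryGroup hab⟩

end SpecialUnitaries

instance matrixBorelSpace (d : ℕ) : BorelSpace (Matrix (Fin d) (Fin d) ℂ) :=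
  Pi.borelSpace

instance (d : ℕ) : MeasurableMul (unitaryGroup (Fin d) ℂ) where
  measurable_const_mul V := (continuous_const_mul V).measurable
  measurable_mul_const V := (continuous_mul_const V).measurable

lemma norm_add_sq_mul_norm_sub_sq (u v : ℂ) :
    ‖u + v‖ ^ 2 * ‖u - v‖ ^ 2 =
      (‖u‖ ^ 2) ^ 2 + (‖v‖ ^ 2) ^ 2 - 2 * (u ^ 2 * (starRingEnd ℂ) v ^ 2).re := by
  simp only [Complex.sq_norm, Complex.normSq_apply]
  simp only [pow_two, Complex.add_re, Complex.add_im, Complex.sub_re, Complex.sub_im,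
    Complex.mul_re, Complex.mul_im, Complex.conj_re, Complex.conj_im]
  ring

section ColumnWeights

variable {d : ℕ} (k : Fin d)

noncomputable def colWeight (a : Fin d) (U : unitaryGroup (Fin d) ℂ) : ℝ :=
  ‖U.1 a k‖ ^ 2

noncomputable def colCrossTerm (a b : Fin d) (U : unitaryGroup (Fin d) ℂ) : ℝ :=
  (U.1 a k ^ 2 * (starRingEnd ℂ) (U.1 b k) ^ 2).re

lemma continuous_unitaryGroup_apply (a : Fin d) :
    Continuous fun U : unitaryGroup (Fin d) ℂ => U.1 a k :=
  continuous_subtype_val.matrix_elem a k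

lemma continuous_colWeight (a : Fin d) : Continuous (colWeight k a) :=
  (continuous_unitaryGroup_apply k a).norm.pow 2

lemma continuous_colCrossTerm (a b : Fin d) : Continuous (colCrossTerm k a b) :=
  Complex.continuous_re.comp (((continuous_unitaryGroup_apply k a).pow 2).mul
    ((Complex.continuous_conj.comp (continuous_unitaryGroup_apply k b)).pow 2))

lemma colWeight_nonneg (a : Fin d) (U : unitaryGroup (Fin d) ℂ) : 0 ≤ colWeight k a U :=
  sq_nonneg _

lemma colWeight_le_one (a : Fin d) (U : unitaryGroup (Fin d) ℂ) : colWeight k a U ≤ 1 :=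
  pow_le_one₀ (norm_nonneg _) (entry_norm_bound_of_unitary U.2 a k)

lemma sum_colWeight (U : unitaryGroup (Fin d) ℂ) : ∑ a, colWeight k a U = 1 := by
  have h := congr_fun₂ (mem_unitaryGroup_iff'.mp U.2) k k
  simp only [mul_apply, star_apply, RCLike.star_def, Complex.conj_mul', one_apply_eq] at h
  exact_mod_cast h

lemma abs_colCrossTerm_le_one (a b : Fin d) (U : unitaryGroup (Fin d) ℂ) :
    |colCrossTerm k a b U| ≤ 1 := by
  refine (Complex.abs_re_le_norm _).trans ?_
  rw [norm_mul, norm_pow, norm_pow, Complex.norm_conj]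
  exact mul_le_one₀ (colWeight_le_one k a U) (colWeight_nonneg k b U) (colWeight_le_one k b U)

lemma colWeight_permUnitary_mul (σ : Perm (Fin d)) (a : Fin d) (U : unitaryGroup (Fin d) ℂ) :
    colWeight k a (permUnitary σ * U) = colWeight k (σ a) U := by
  rw [colWeight, permUnitary_mul_apply, colWeight]

lemma colWeight_phaseUnitary_mul (a p : Fin d) (U : unitaryGroup (Fin d) ℂ) :
    colWeight k p (phaseUnitary a * U) = colWeight k p U := by
  rw [colWeight, phaseUnitary_mul_apply, norm_mul, colWeight]
  rcases eq_or_ne p a with rfl | hpa <;> simp [*]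

lemma colCrossTerm_phaseUnitary_mul {a b : Fin d} (hab : a ≠ b) (U : unitaryGroup (Fin d) ℂ) :
    colCrossTerm k a b (phaseUnitary a * U) = -colCrossTerm k a b U := by
  simp [colCrossTerm, phaseUnitary_mul_apply, hab.symm, mul_pow]

lemma colWeight_hadamardUnitary_mul_of_ne {a b c : Fin d} (hab : a ≠ b) (hca : c ≠ a)
    (hcb : c ≠ b) (U : unitaryGroup (Fin d) ℂ) :
    colWeight k c (hadamardUnitary hab * U) = colWeight k c U := by
  simp [colWeight, hadamardUnitary, hadamardMatrix_mul_apply, hca, hcb]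

lemma colWeight_hadamardUnitary_mul_mul {a b : Fin d} (hab : a ≠ b)
    (U : unitaryGroup (Fin d) ℂ) :
    colWeight k a (hadamardUnitary hab * U) * colWeight k b (hadamardUnitary hab * U) =
      (colWeight k a U ^ 2 + colWeight k b U ^ 2) / 4 - colCrossTerm k a b U / 2 := by
  simp only [colWeight, colCrossTerm, hadamardUnitary, Submonoid.coe_mul,
    hadamardMatrix_mul_apply, if_true, if_neg hab.symm, norm_mul, mul_pow, norm_inv_sqrt_two_sq]
  linear_combination (1 / 4) * norm_add_sq_mul_norm_sub_sq (U.1 a k) (U.1 b k)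

end ColumnWeights

section ColumnMoments

variable {d : ℕ} (k : Fin d) (μ : Measure (unitaryGroup (Fin d) ℂ))

noncomputable def columnMoment (s : Multiset (Fin d)) : ℝ :=
  ∫ U, (s.map fun a => colWeight k a U).prod ∂μ

lemma integrable_prod_colWeight [IsFiniteMeasure μ] (s : Multiset (Fin d)) :
    Integrable (fun U => (s.map fun a => colWeight k a U).prod) μ := by
  induction s using Multiset.induction_on with
  | empty => simp
  | cons a s ih =>
    simp only [Multiset.map_cons, Multiset.prod_cons]
    refine ih.bdd_mul (c := 1) (continuous_colWeight k a).aestronglyMeasurable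
      (ae_of_all _ fun U => ?_)
    rw [Real.norm_of_nonneg (colWeight_nonneg k a U)]
    exact colWeight_le_one k a U

lemma columnMoment_zero [IsProbabilityMeasure μ] : columnMoment k μ 0 = 1 := by
  simp [columnMoment]

lemma sum_columnMoment_cons [IsFiniteMeasure μ] (s : Multiset (Fin d)) :
    ∑ p, columnMoment k μ (p ::ₘ s) = columnMoment k μ s := by
  unfold columnMoment
  rw [← integral_finsetSum _ fun p _ => integrable_prod_colWeight k μ (p ::ₘ s)]
  simp only [Multiset.map_cons, Multiset.prod_cons, ← Finset.sum_mul, sum_colWeight, one_mul]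

variable [μ.IsMulLeftInvariant]

lemma columnMoment_map_perm (σ : Perm (Fin d)) (s : Multiset (Fin d)) :
    columnMoment k μ (s.map σ) = columnMoment k μ s := by
  unfold columnMoment
  conv_rhs => rw [← integral_mul_left_eq_self _ (permUnitary σ)]
  simp only [colWeight_permUnitary_mul, Multiset.map_map, Function.comp_def]

lemma integral_colCrossTerm_mul_prod_colWeight {a b : Fin d} (hab : a ≠ b)
    (s : Multiset (Fin d)) :
    ∫ U, colCrossTerm k a b U * (s.map fun c => colWeight k c U).prod ∂μ = 0 :=
  integral_eq_zero_of_mul_left_eq_neg (g := phaseUnitary a) fun U => by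
    simp only [colCrossTerm_phaseUnitary_mul k hab, colWeight_phaseUnitary_mul, neg_mul]

lemma columnMoment_cons_cons [IsFiniteMeasure μ] {a b : Fin d} (hab : a ≠ b)
    {s : Multiset (Fin d)} (ha : a ∉ s) (hb : b ∉ s) :
    columnMoment k μ (a ::ₘ b ::ₘ s) =
      (columnMoment k μ (a ::ₘ a ::ₘ s) + columnMoment k μ (b ::ₘ b ::ₘ s)) / 4 := by
  set H := hadamardUnitary hab
  set P := fun U => (s.map fun c => colWeight k c U).prod
  have hP (U : unitaryGroup (Fin d) ℂ) : P (H * U) = P U :=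
    congrArg Multiset.prod <| Multiset.map_congr rfl fun c hc =>
      colWeight_hadamardUnitary_mul_of_ne k hab (ne_of_mem_of_not_mem hc ha)
        (ne_of_mem_of_not_mem hc hb) U
  have hsquares : Integrable (fun U => 1 / 4 * ((a ::ₘ a ::ₘ s).map (colWeight k · U)).prod +
      1 / 4 * ((b ::ₘ b ::ₘ s).map (colWeight k · U)).prod) μ :=
    ((integrable_prod_colWeight k μ _).const_mul _).add
      ((integrable_prod_colWeight k μ _).const_mul _)
  have hcross : Integrable (fun U => colCrossTerm k a b U * P U) μ :=
    (integrable_prod_colWeight k μ s).bdd_mul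
      (continuous_colCrossTerm k a b).aestronglyMeasurable
      (ae_of_all _ fun U => abs_colCrossTerm_le_one k a b U)
  calc columnMoment k μ (a ::ₘ b ::ₘ s)
      = ∫ U, colWeight k a (H * U) * colWeight k b (H * U) * P (H * U) ∂μ := by
        rw [integral_mul_left_eq_self (fun U => colWeight k a U * colWeight k b U * P U) H]
        simp [columnMoment, P, mul_assoc]
    _ = ∫ U, (1 / 4 * ((a ::ₘ a ::ₘ s).map (colWeight k · U)).prod +
          1 / 4 * ((b ::ₘ b ::ₘ s).map (colWeight k · U)).prod) -
          1 / 2 * (colCrossTerm k a b U * P U) ∂μ := by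
        congr 1 with U
        rw [colWeight_hadamardUnitary_mul_mul, hP]
        simp only [P, Multiset.map_cons, Multiset.prod_cons]
        ring
    _ = (columnMoment k μ (a ::ₘ a ::ₘ s) + columnMoment k μ (b ::ₘ b ::ₘ s)) / 4 := by
        rw [integral_sub hsquares (hcross.const_mul _),
          integral_add ((integrable_prod_colWeight k μ _).const_mul _)
            ((integrable_prod_colWeight k μ _).const_mul _),
          integral_const_mul, integral_const_mul, integral_const_mul,
          integral_colCrossTerm_mul_prod_colWeight k μ hab, columnMoment, columnMoment]
        ring

end ColumnMoments

lemma Finset.sum_univ_eq_sum_sub_add_card_mul {ι R : Type*} [Fintype ι] [CommRing R]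
    (f : ι → R) (s : Finset ι) (c : R) (h : ∀ p ∉ s, f p = c) :
    ∑ p, f p = ∑ p ∈ s, (f p - c) + Fintype.card ι * c := by
  rw [Finset.sum_subset (Finset.subset_univ s) fun p _ hp => by rw [h p hp, sub_self],
    ← Finset.card_univ, ← nsmul_eq_mul, ← Finset.sum_const, ← Finset.sum_add_distrib]
  simp

section ColumnMomentValues

variable {d : ℕ} (k : Fin d) (μ : Measure (unitaryGroup (Fin d) ℂ)) [IsProbabilityMeasure μ]
  [μ.IsMulLeftInvariant]

lemma columnMoment_singleton (a : Fin d) : columnMoment k μ {a} = 1 / d := by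
  have hconst (p : Fin d) : columnMoment k μ {p} = columnMoment k μ {a} := by
    simpa using columnMoment_map_perm k μ (swap a p) {a}
  have hsum := sum_columnMoment_cons k μ 0
  simp only [Multiset.cons_zero, hconst, Finset.sum_const, Finset.card_univ, Fintype.card_fin,
    nsmul_eq_mul, columnMoment_zero] at hsum
  have hd : (d : ℝ) ≠ 0 := Nat.cast_ne_zero.mpr a.pos.ne'
  field_simp
  linarith

lemma columnMoment_pair {a b : Fin d} (hab : a ≠ b) :
    columnMoment k μ {a, b} = 1 / (d * (d + 1)) := by
  set D := columnMoment k μ (a ::ₘ {a})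
  have hdiag (p : Fin d) : columnMoment k μ (p ::ₘ {p}) = D := by
    simpa using columnMoment_map_perm k μ (swap a p) (a ::ₘ {a})
  have hoff (p : Fin d) (hp : p ≠ a) : columnMoment k μ (p ::ₘ {a}) = D / 2 := by
    have := columnMoment_cons_cons k μ hp (Multiset.notMem_zero p) (Multiset.notMem_zero a)
    simp only [Multiset.cons_zero, hdiag] at this
    linarith
  have hsum := sum_columnMoment_cons k μ {a}
  rw [Finset.sum_univ_eq_sum_sub_add_card_mul _ {a} (D / 2)
      fun p hp => hoff p (Finset.notMem_singleton.mp hp),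
    Finset.sum_singleton, columnMoment_singleton, Fintype.card_fin] at hsum
  have hd : (d : ℝ) ≠ 0 := Nat.cast_ne_zero.mpr a.pos.ne'
  rw [Multiset.pair_comm, Multiset.insert_eq_cons, hoff b hab.symm]
  field_simp at hsum ⊢
  linarith

lemma columnMoment_triple {a b c : Fin d} (hab : a ≠ b) (hac : a ≠ c) (hbc : b ≠ c) :
    columnMoment k μ {a, b, c} = 1 / (d * (d + 1) * (d + 2)) := by
  set D := columnMoment k μ (a ::ₘ a ::ₘ {b})
  have haap (p : Fin d) (hp : p ≠ a) : columnMoment k μ (a ::ₘ a ::ₘ {p}) = D := by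
    simpa [swap_apply_of_ne_of_ne hab hp.symm] using
      columnMoment_map_perm k μ (swap b p) (a ::ₘ a ::ₘ {b})
  have hbbp (p : Fin d) (hpa : p ≠ a) (hpb : p ≠ b) :
      columnMoment k μ (b ::ₘ b ::ₘ {p}) = D := by
    rw [← haap p hpa]
    simpa [swap_apply_of_ne_of_ne hpa hpb] using
      columnMoment_map_perm k μ (swap a b) (a ::ₘ a ::ₘ {p})
  have hperm (p : Fin d) : p ::ₘ {a, b} = a ::ₘ b ::ₘ {p} := by
    rw [Multiset.insert_eq_cons, Multiset.cons_swap]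
    exact congrArg _ (Multiset.pair_comm p b)
  have hhalf (p : Fin d) (hpa : p ≠ a) (hpb : p ≠ b) :
      columnMoment k μ (p ::ₘ {a, b}) = D / 2 := by
    rw [hperm, columnMoment_cons_cons k μ hab (by simpa using hpa.symm)
      (by simpa using hpb.symm), haap p hpa, hbbp p hpa hpb]
    ring
  have haab : columnMoment k μ (a ::ₘ {a, b}) = D := rfl
  have hbab : columnMoment k μ (b ::ₘ {a, b}) = D := by
    rw [Multiset.pair_comm]
    simpa using columnMoment_map_perm k μ (swap a b) (a ::ₘ a ::ₘ {b})
  have hsum := sum_columnMoment_cons k μ {a, b}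
  rw [columnMoment_pair k μ hab, Finset.sum_univ_eq_sum_sub_add_card_mul _ {a, b} (D / 2)
      fun p hp => by
        simp only [Finset.mem_insert, Finset.mem_singleton, not_or] at hp
        exact hhalf p hp.1 hp.2,
    Finset.sum_pair hab, haab, hbab, Fintype.card_fin] at hsum
  have hd : (d : ℝ) ≠ 0 := Nat.cast_ne_zero.mpr a.pos.ne'
  rw [show ({a, b, c} : Multiset (Fin d)) = c ::ₘ {a, b} from (hperm c).symm,
    hhalf c hac.symm hbc.symm]
  field_simp at hsum ⊢
  linarith

end ColumnMomentValues

lemma rhoR_eq_diagonal (d r : ℕ) :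
    rhoR d r = diagonal fun q : Fin d => if (q : ℕ) < r then (r : ℂ)⁻¹ else 0 := by
  rw [rhoR, ← sum_single_eq_diagonal, Finset.smul_sum]
  refine Finset.sum_congr rfl fun q _ => ?_
  split_ifs <;> simp

lemma star_mul_rhoR_mul_apply_re {d : ℕ} (M : Matrix (Fin d) (Fin d) ℂ) (r : ℕ) (k : Fin d) :
    ((star M * rhoR d r * M) k k).re = (r : ℝ)⁻¹ * ∑ q : Fin d with q.val < r, ‖M q k‖ ^ 2 := by
  rw [rhoR_eq_diagonal, mul_apply, Complex.re_sum, Finset.sum_filter, Finset.mul_sum]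
  refine Finset.sum_congr rfl fun q _ => ?_
  rw [mul_diagonal, star_apply, RCLike.star_def, mul_right_comm, Complex.conj_mul']
  split_ifs <;>
    simp [← Complex.ofReal_pow, ← Complex.ofReal_natCast, ← Complex.ofReal_inv, mul_comm]

theorem covariant_ls_C_offdiagonal_moment_general
    (d r : ℕ) (hr : 1 ≤ r)
    (μ : Measure (Matrix.unitaryGroup (Fin d) ℂ)) [IsProbabilityMeasure μ]
    (hμ : ∀ V : Matrix.unitaryGroup (Fin d) ℂ, μ.map (fun U => V * U) = μ)
    (k i j : Fin d) (hij : i ≠ j) (hi : r ≤ (i : ℕ)) (hj : r ≤ (j : ℕ)) :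
    (d : ℝ) * ((d : ℝ) + 1) ^ 2 *
      ∫ U, ((star (U : Matrix (Fin d) (Fin d) ℂ) * rhoR d r * (U : Matrix (Fin d) (Fin d) ℂ)) k k).re *
        (‖(U : Matrix (Fin d) (Fin d) ℂ) i k‖ ^ 2 * ‖(U : Matrix (Fin d) (Fin d) ℂ) j k‖ ^ 2) ∂μ
      = ((d : ℝ) + 1) / ((d : ℝ) + 2) := by
  have : μ.IsMulLeftInvariant := ⟨hμ⟩
  have hintegrand (U : unitaryGroup (Fin d) ℂ) :
      ((star U.1 * rhoR d r * U.1) k k).re * (‖U.1 i k‖ ^ 2 * ‖U.1 j k‖ ^ 2) =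
        (r : ℝ)⁻¹ * ∑ q : Fin d with q.val < r,
          (({q, i, j} : Multiset (Fin d)).map (colWeight k · U)).prod := by
    rw [star_mul_rhoR_mul_apply_re, mul_assoc, Finset.sum_mul]
    simp [colWeight]
  have htriple (q : Fin d) (hq : q ∈ ({q | q.val < r} : Finset (Fin d))) :
      columnMoment k μ {q, i, j} = 1 / (d * (d + 1) * (d + 2)) := by
    rw [Finset.mem_filter] at hq
    exact columnMoment_triple k μ (Fin.ne_of_lt (by omega)) (Fin.ne_of_lt (by omega)) hij
  calc _ = (d : ℝ) * (d + 1) ^ 2 *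
        ((r : ℝ)⁻¹ * ∑ q : Fin d with q.val < r, columnMoment k μ {q, i, j}) := by
        simp_rw [hintegrand]
        rw [integral_const_mul, integral_finsetSum _ fun q _ => integrable_prod_colWeight k μ _]
        rfl
    _ = _ := by
        have hd0 : (d : ℝ) ≠ 0 := Nat.cast_ne_zero.mpr i.pos.ne'
        have hr0 : (r : ℝ) ≠ 0 := Nat.cast_ne_zero.mpr (by omega)
        rw [Finset.sum_congr rfl htriple, Finset.sum_const, Fin.card_filter_val_lt,
          min_eq_right (by omega), nsmul_eq_mul]
        field_simp

/-- Second moment of an off-diagonal entry of the `C` block of the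
covariant-measurement LS estimator for `ρ_r`:
`d(d+1)²·∫ ⟨e_k, U*ρ_r U e_k⟩·|U_{ik}|²|U_{jk}|² dU = (d+1)/(d+2)` for `r < i, j ≤ d`, `i ≠ j`. -/
theorem covariant_ls_C_offdiagonal_moment
    (d r : ℕ) (hd : 3 ≤ d) (hr : 1 ≤ r) (hrd : r + 2 ≤ d)
    (μ : Measure (Matrix.unitaryGroup (Fin d) ℂ)) [IsProbabilityMeasure μ]
    (hμ : ∀ V : Matrix.unitaryGroup (Fin d) ℂ, μ.map (fun U => V * U) = μ)
    (k i j : Fin d) (hij : i ≠ j) (hi : r ≤ (i : ℕ)) (hj : r ≤ (j : ℕ)) :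
    (d : ℝ) * ((d : ℝ) + 1) ^ 2 *
      ∫ U, ((star (U : Matrix (Fin d) (Fin d) ℂ) * rhoR d r * (U : Matrix (Fin d) (Fin d) ℂ)) k k).re *
        (‖(U : Matrix (Fin d) (Fin d) ℂ) i k‖ ^ 2 * ‖(U : Matrix (Fin d) (Fin d) ℂ) j k‖ ^ 2) ∂μ
      = ((d : ℝ) + 1) / ((d : ℝ) + 2) :=
  covariant_ls_C_offdiagonal_moment_general d r hr μ hμ k i j hij hi hj
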